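/- Let G be a finite group, p a prime, and g ∈ G an element of order p^k with p^k maximal among p-power orders of elements of G. Then for every 1 ≤ n ≤ k, the element g^{p^{n-1}} is not a p^n-th power in G, but is an m-th power in G for every 1 ≤ m < p^n. -/

import Mathlib

/-!
Every element whose order is a power of `p` has order at most `p ^ k`, so `h ^ (p ^ k) = 1`
whenever `h ^ (p ^ j) = 1` for some `j`. If `h ^ (p ^ n) = g ^ (p ^ (n - 1))`, then `h` has
`p`-power order, hence `g ^ (p ^ (k - 1)) = h ^ (p ^ k) = 1`, which is impossible.

For `m < p ^ n`, write `m = p ^ a * t` with `p ∤ t`; then `a ≤ n - 1`, and since `t` is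
coprime to the order of `g`, the element `g` is a `t`-th power of a power of itself, which makes
`g ^ (p ^ (n - 1))` an `m`-th power.
-/

section Monoid

variable {M : Type*} [Monoid M]

theorem exists_pow_mul_eq_pow_of_dvd_of_coprime {g : M} {c d t : ℕ} (hdc : d ∣ c)
    (ht : t.Coprime (orderOf g)) : ∃ h : M, h ^ (d * t) = g ^ c := by
  obtain ⟨e, rfl⟩ := hdc
  obtain ⟨s, hs⟩ := exists_pow_eq_self_of_coprime ht
  refine ⟨g ^ (e * s), ?_⟩
  calc (g ^ (e * s)) ^ (d * t) = ((g ^ t) ^ s) ^ (d * e) := by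
        simp only [← pow_mul]; ring_nf
    _ = g ^ (d * e) := by rw [hs]

variable {p k : ℕ}

theorem pow_prime_pow_eq_one_of_forall_orderOf_le (hp : p.Prime)
    (hmax : ∀ (h : M) (j : ℕ), orderOf h = p ^ j → j ≤ k) {h : M} {j : ℕ}
    (hj : h ^ (p ^ j) = 1) : h ^ (p ^ k) = 1 := by
  obtain ⟨i, -, hi⟩ := (Nat.dvd_prime_pow hp).mp (orderOf_dvd_of_pow_eq_one hj)
  rw [← orderOf_dvd_iff_pow_eq_one, hi]
  exact pow_dvd_pow p (hmax h i hi)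

theorem not_exists_pow_prime_pow_eq (hp : p.Prime) {g : M} (hg : orderOf g = p ^ k)
    (hmax : ∀ (h : M) (j : ℕ), orderOf h = p ^ j → j ≤ k) {n : ℕ} (hn : 1 ≤ n) (hnk : n ≤ k) :
    ¬ ∃ h : M, h ^ (p ^ n) = g ^ (p ^ (n - 1)) := by
  rintro ⟨h, hh⟩
  have hpow : ∀ i, (h ^ (p ^ n)) ^ (p ^ i) = g ^ (p ^ (n - 1 + i)) := fun i => by
    rw [hh, ← pow_mul, pow_add]
  have hh1 : h ^ (p ^ (k + 1)) = 1 := by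
    rw [show k + 1 = n + (k + 1 - n) by omega, pow_add, pow_mul, hpow,
      show n - 1 + (k + 1 - n) = k by omega, ← hg, pow_orderOf_eq_one]
  have hgk : g ^ (p ^ (k - 1)) = 1 := by
    rw [show k - 1 = n - 1 + (k - n) by omega, ← hpow, ← pow_mul, ← pow_add,
      show n + (k - n) = k by omega]
    exact pow_prime_pow_eq_one_of_forall_orderOf_le hp hmax hh1
  refine pow_ne_one_of_lt_orderOf (pow_ne_zero _ hp.ne_zero) ?_ hgk
  rw [hg]
  exact Nat.pow_lt_pow_right hp.one_lt (by omega)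

theorem exists_pow_eq_pow_prime_pow (hp : p.Prime) {g : M} (hg : orderOf g = p ^ k)
    {n m : ℕ} (hm : 1 ≤ m) (hmn : m < p ^ n) : ∃ h : M, h ^ m = g ^ (p ^ (n - 1)) := by
  have hm0 : m ≠ 0 := by omega
  set a := m.factorization p
  have ha : a < n := (Nat.pow_lt_pow_iff_right hp.one_lt).mp
    ((Nat.ordProj_le p hm0).trans_lt hmn)
  have ht : (m / p ^ a).Coprime (orderOf g) := by
    rw [hg]
    exact ((Nat.coprime_ordCompl hp hm0).pow_left k).symm
  rw [← Nat.ordProj_mul_ordCompl_eq_self m p]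
  exact exists_pow_mul_eq_pow_of_dvd_of_coprime (pow_dvd_pow p (by omega)) ht

end Monoid

theorem stmt_6_general (G : Type*) [Group G] (p : ℕ) (hp : p.Prime)
    (g : G) (k : ℕ) (hg : orderOf g = p ^ k)
    (hmax : ∀ (h : G) (j : ℕ), orderOf h = p ^ j → j ≤ k) :
    ∀ n : ℕ, 1 ≤ n → n ≤ k →
      (¬ ∃ h : G, h ^ (p ^ n) = g ^ (p ^ (n - 1))) ∧
      ∀ m : ℕ, 1 ≤ m → m < p ^ n → ∃ h : G, h ^ m = g ^ (p ^ (n - 1)) := fun _ hn hnk =>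
  ⟨not_exists_pow_prime_pow_eq hp hg hmax hn hnk,
    fun _ hm hmn => exists_pow_eq_pow_prime_pow hp hg hm hmn⟩

theorem stmt_6 (G : Type*) [Group G] [Finite G] (p : ℕ) (hp : p.Prime)
    (g : G) (k : ℕ) (hg : orderOf g = p ^ k)
    (hmax : ∀ (h : G) (j : ℕ), orderOf h = p ^ j → j ≤ k) :
    ∀ n : ℕ, 1 ≤ n → n ≤ k →
      (¬ ∃ h : G, h ^ (p ^ n) = g ^ (p ^ (n - 1))) ∧
      ∀ m : ℕ, 1 ≤ m → m < p ^ n → ∃ h : G, h ^ m = g ^ (p ^ (n - 1)) :=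
  stmt_6_general G p hp g k hg hmax
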